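/- arXiv:2003.11406 — 4 statements merged into one kernel-verified Lean document; each statement's English description precedes it below -/
import Mathlib

section
/- Let n ≥ 1 be an odd squarefree integer and suppose n = β₀β₁β₂β₃ with β₀, β₁, β₂, β₃ ∈ ℤ[i]. Then there exist units η₀, …, η₃ ∈ {±1, ±i} with η₀η₁η₂η₃ = 1, positive integers b₀, …, b₃, and primitive primary Gaussian integers z_{kℓ} (0 ≤ k ≠ ℓ ≤ 3) with z_{ℓk} = conjugate of z_{kℓ}, such that β_k = η_k b_k ∏_{ℓ≠k} z_{kℓ} and β_k/b_k is primitive, for each k. Moreover, this decomposition is unique. -/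
/-- A Gaussian integer `x + iy` is primitive if `gcd(x, y) = 1`. -/
def GIsPrimitive (z : GaussianInt) : Prop := Int.gcd z.re z.im = 1

/-- A Gaussian integer is primary if it is `≡ 1 (mod 2(1+i))`. -/
def GIsPrimary (z : GaussianInt) : Prop :=
  (2 * (⟨1, 1⟩ : GaussianInt)) ∣ (z - 1)

/-- Complex conjugation on Gaussian integers. -/
def gconj (z : GaussianInt) : GaussianInt := ⟨z.re, -z.im⟩

/-!
Split off contents, `β k = b k * w k` with `w k` primitive; then `∏ w k` is an odd squarefree
rational integer, which stays squarefree in `ℤ[i]`. The only candidate for `z k l` is the primary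
associate of `gcd (w k) (conj (w l))`. Along a row these gcds are pairwise coprime, since distinct
`w l` are, and their product exhausts `w k`: for a prime `π ∣ w k`, `conj π` divides the rational
integer `∏ w j`, hence some `w j`, and `j = k` is impossible because a primitive element of odd
norm cannot be divisible by both `π` and `conj π` (it would be divisible by `N(π)` or by a
rational integer associated to `π`). Conversely every admissible `z k l` divides that gcd and the
row products agree up to units, so `z k l` is associated to it, and primary normalisation fixes
it. The units then have product `1` because `n = (∏ η k) * ∏ b k * ∏_{k < l} N(z k l)` and
`n > 0`.
-/

local notation "ℤ[i]" => GaussianInt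

theorem Finset.associated_of_dvd_of_associated_prod {ι α : Type*} [CommMonoidWithZero α]
    [IsCancelMulZero α] {s : Finset ι} {a c : ι → α} (hdvd : ∀ i ∈ s, a i ∣ c i)
    (hprod : Associated (∏ i ∈ s, a i) (∏ i ∈ s, c i)) (hc : ∏ i ∈ s, c i ≠ 0) :
    ∀ i ∈ s, Associated (a i) (c i) := by
  choose! t ht using hdvd
  have hct : ∏ i ∈ s, c i = (∏ i ∈ s, a i) * ∏ i ∈ s, t i := by
    rw [← Finset.prod_mul_distrib]
    exact Finset.prod_congr rfl ht
  have ha : ∏ i ∈ s, a i ≠ 0 := fun h => hc (hprod.eq_zero_iff.mp h)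
  have hunit : IsUnit (∏ i ∈ s, t i) := isUnit_of_associated_mul (hct ▸ hprod.symm) ha
  intro i hi
  rw [ht i hi]
  exact associated_mul_unit_right _ _ (isUnit_of_dvd_unit (Finset.dvd_prod_of_mem t hi) hunit)

theorem Odd.of_dvd_int {a b : ℤ} (hb : Odd b) (h : a ∣ b) : Odd a :=
  Int.not_even_iff_odd.mp (mt h.even (Int.not_even_iff_odd.mpr hb))

theorem gconj_eq_star (z : ℤ[i]) : gconj z = star z := rfl

namespace GaussianInt

open Zsqrtd Finset

theorem isUnit_iff_eq {u : ℤ[i]} :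
    IsUnit u ↔ u = 1 ∨ u = -1 ∨ u = ⟨0, 1⟩ ∨ u = ⟨0, -1⟩ := by
  refine ⟨fun hu => ?_, ?_⟩
  · have hnorm : u.re * u.re + u.im * u.im = 1 := by
      have := (norm_eq_one_iff' (by norm_num) u).mpr hu
      rw [Zsqrtd.norm_def] at this
      linarith
    have hre : u.re = -1 ∨ u.re = 0 ∨ u.re = 1 := by
      have : -1 ≤ u.re ∧ u.re ≤ 1 := ⟨by nlinarith, by nlinarith⟩
      omega
    have him : u.im = -1 ∨ u.im = 0 ∨ u.im = 1 := by
      have : -1 ≤ u.im ∧ u.im ≤ 1 := ⟨by nlinarith, by nlinarith⟩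
      omega
    rcases hre with h | h | h <;> rcases him with h' | h' | h' <;>
      simp_all [Zsqrtd.ext_iff]
  · rintro (rfl | rfl | rfl | rfl) <;> rw [← norm_eq_one_iff' (by norm_num)] <;> rfl

theorem eq_one_of_isUnit_of_mul_intCast_eq {u : ℤ[i]} {c n : ℤ} (hu : IsUnit u) (hc : 0 ≤ c)
    (hn : 0 < n) (h : u * c = n) : u = 1 := by
  have hre := congrArg Zsqrtd.re h
  rcases isUnit_iff_eq.mp hu with rfl | rfl | rfl | rfl
  · rfl
  all_goals simp at hre; omega

theorem odd_norm_iff {z : ℤ[i]} : Odd z.norm ↔ Odd (z.re + z.im) := by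
  simp [Zsqrtd.norm_def, Int.odd_mul, parity_simps]

theorem gIsPrimary_iff {z : ℤ[i]} :
    GIsPrimary z ↔ 4 ∣ z.re + z.im - 1 ∧ 4 ∣ z.im - z.re + 1 := by
  have h : 2 * (⟨1, 1⟩ : ℤ[i]) = ⟨2, 2⟩ := by ext <;> simp
  rw [GIsPrimary, h]
  constructor
  · rintro ⟨t, ht⟩
    have hre := congrArg Zsqrtd.re ht
    have him := congrArg Zsqrtd.im ht
    simp only [re_sub, im_sub, re_one, im_one, re_mul, im_mul] at hre him
    exact ⟨⟨t.re, by linarith⟩, ⟨t.im, by linarith⟩⟩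
  · rintro ⟨⟨a, ha⟩, ⟨c, hc⟩⟩
    exact ⟨⟨a, c⟩, by ext <;> simp <;> omega⟩

theorem _root_.GIsPrimary.star {z : ℤ[i]} (h : GIsPrimary z) : GIsPrimary (star z) := by
  rw [gIsPrimary_iff] at h ⊢
  simp only [re_star, im_star]
  omega

theorem _root_.GIsPrimary.eq_of_associated {x y : ℤ[i]} (hxy : Associated x y)
    (hx : GIsPrimary x) (hy : GIsPrimary y) : x = y := by
  obtain ⟨u, rfl⟩ := hxy
  rw [gIsPrimary_iff] at hx hy
  rcases isUnit_iff_eq.mp u.isUnit with h | h | h | h <;> rw [h] at hy ⊢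
  · rw [mul_one]
  all_goals simp [re_mul, im_mul] at hy; omega

theorem exists_associated_gIsPrimary {z : ℤ[i]} (hz : Odd z.norm) :
    ∃ z', Associated z z' ∧ GIsPrimary z' := by
  have hodd := odd_norm_iff.mp hz
  have key : ∃ u : ℤ[i], IsUnit u ∧ GIsPrimary (z * u) := by
    simp only [gIsPrimary_iff, isUnit_iff_eq]
    have hs : (z.re + z.im) % 4 = 1 ∨ (z.re + z.im) % 4 = 3 := by
      rcases hodd with ⟨k, hk⟩; omega
    have hd : (z.im - z.re) % 4 = 1 ∨ (z.im - z.re) % 4 = 3 := by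
      rcases hodd with ⟨k, hk⟩; omega
    rcases hs with hs | hs <;> rcases hd with hd | hd
    · exact ⟨⟨0, -1⟩, by simp, by simp [re_mul, im_mul]; omega⟩
    · exact ⟨1, by simp, by simp; omega⟩
    · exact ⟨-1, by simp, by simp; omega⟩
    · exact ⟨⟨0, 1⟩, by simp, by simp [re_mul, im_mul]; omega⟩
  obtain ⟨u, hu, hzu⟩ := key
  exact ⟨z * u, associated_mul_unit_right z u hu, hzu⟩

theorem star_dvd_star {x y : ℤ[i]} (h : x ∣ y) : star x ∣ star y :=
  map_dvd (starRingEnd ℤ[i]) h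

theorem dvd_star_iff {x y : ℤ[i]} : x ∣ star y ↔ star x ∣ y :=
  ⟨fun h => star_star y ▸ star_dvd_star h, fun h => star_star x ▸ star_dvd_star h⟩

theorem _root_.Prime.star {π : ℤ[i]} (hπ : Prime π) : Prime (star π) :=
  (MulEquiv.prime_iff (starRingAut : RingAut ℤ[i])).mpr hπ

theorem odd_norm_of_dvd_intCast {z : ℤ[i]} {m : ℤ} (hm : Odd m) (h : z ∣ m) : Odd z.norm :=
  (hm.mul hm).of_dvd_int (norm_intCast m ▸ map_dvd normMonoidHom h)

theorem _root_.GIsPrimitive.isUnit_of_intCast_dvd {w : ℤ[i]} {c : ℤ} (hw : GIsPrimitive w)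
    (h : (c : ℤ[i]) ∣ w) : IsUnit c := by
  rw [intCast_dvd] at h
  rw [Int.isUnit_iff_natAbs_eq, ← Nat.dvd_one, ← hw]
  exact Nat.dvd_gcd (Int.natAbs_dvd_natAbs.mpr h.1) (Int.natAbs_dvd_natAbs.mpr h.2)

theorem _root_.GIsPrimitive.ne_zero {w : ℤ[i]} (hw : GIsPrimitive w) : w ≠ 0 := by
  rintro rfl
  simp [GIsPrimitive] at hw

theorem _root_.GIsPrimitive.of_dvd {z w : ℤ[i]} (hw : GIsPrimitive w) (h : z ∣ w) :
    GIsPrimitive z := by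
  have hg : ((Int.gcd z.re z.im : ℤ) : ℤ[i]) ∣ z :=
    (intCast_dvd _ _).mpr ⟨Int.gcd_dvd_left _ _, Int.gcd_dvd_right _ _⟩
  have := hw.isUnit_of_intCast_dvd (hg.trans h)
  rwa [Int.isUnit_iff_natAbs_eq, Int.natAbs_natCast] at this

theorem natCast_mul_eq (b : ℕ) (w : ℤ[i]) : (b : ℤ[i]) * w = ⟨b * w.re, b * w.im⟩ := by
  ext <;> simp

theorem exists_natCast_mul_gIsPrimitive {z : ℤ[i]} (hz : z ≠ 0) :
    ∃ b : ℕ, 0 < b ∧ ∃ w, GIsPrimitive w ∧ z = b * w := by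
  have hg : 0 < Int.gcd z.re z.im := by
    rw [Int.gcd_pos_iff]
    by_contra! h
    exact hz (Zsqrtd.ext h.1 h.2)
  refine ⟨_, hg, ⟨z.re / Int.gcd z.re z.im, z.im / Int.gcd z.re z.im⟩,
    Int.gcd_div_gcd_div_gcd hg, ?_⟩
  rw [natCast_mul_eq]
  ext
  · exact (Int.mul_ediv_cancel' (Int.gcd_dvd_left _ _)).symm
  · exact (Int.mul_ediv_cancel' (Int.gcd_dvd_right _ _)).symm

theorem gcd_re_im_natCast_mul {w : ℤ[i]} (hw : GIsPrimitive w) (b : ℕ) :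
    Int.gcd ((b : ℤ[i]) * w).re ((b : ℤ[i]) * w).im = b := by
  rw [natCast_mul_eq]
  simp only
  rw [Int.gcd_mul_left, hw]
  simp

theorem exists_associated_intCast_of_associated_star {π : ℤ[i]} (h : Associated π (star π))
    (hodd : Odd π.norm) : ∃ c : ℤ, Associated π c := by
  obtain ⟨u, hu⟩ := h
  have hre := congrArg Zsqrtd.re hu
  have him := congrArg Zsqrtd.im hu
  rcases isUnit_iff_eq.mp u.isUnit with h | h | h | h <;>
    rw [h] at hre him <;> simp [re_mul, im_mul] at hre him
  · exact ⟨π.re, Associated.of_eq (Zsqrtd.ext rfl (by simp; omega))⟩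
  · refine ⟨π.im, (isUnit_iff_eq.mpr (Or.inr (Or.inr (Or.inr rfl)))).unit, ?_⟩
    ext <;> simp [re_mul, im_mul]
    omega
  all_goals
    refine absurd hodd (Int.not_odd_iff_even.mpr ⟨π.im * π.im, ?_⟩)
    rw [Zsqrtd.norm_def, him]
    ring

theorem _root_.Prime.exists_associated_intCast_or_isCoprime_star {π : ℤ[i]} (hπ : Prime π)
    (hodd : Odd π.norm) : (∃ c : ℤ, Associated π c) ∨ IsCoprime π (star π) :=
  (EuclideanDomain.dvd_or_coprime π (star π) hπ.irreducible).imp_left fun h =>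
    exists_associated_intCast_of_associated_star
      (associated_of_dvd_dvd h (dvd_star_iff.mp h)) hodd

theorem _root_.GIsPrimitive.not_star_dvd {w π : ℤ[i]} (hw : GIsPrimitive w) (hodd : Odd w.norm)
    (hπ : Prime π) (hπw : π ∣ w) : ¬ star π ∣ w := by
  intro hsw
  apply hπ.not_isUnit
  rcases hπ.exists_associated_intCast_or_isCoprime_star
    (hodd.of_dvd_int (map_dvd normMonoidHom hπw)) with ⟨c, hc⟩ | hcop
  · exact hc.symm.isUnit ((hw.isUnit_of_intCast_dvd (hc.symm.dvd.trans hπw)).map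
      (Int.castRingHom ℤ[i]))
  · rw [← norm_eq_one_iff, ← Int.isUnit_iff_natAbs_eq]
    exact hw.isUnit_of_intCast_dvd (norm_eq_mul_conj π ▸ hcop.mul_dvd hπw hsw)

theorem squarefree_intCast {m : ℤ} (hm : Odd m) (hsf : Squarefree m) :
    Squarefree (m : ℤ[i]) := by
  have hm0 : (m : ℤ[i]) ≠ 0 := by exact_mod_cast hsf.ne_zero
  rw [squarefree_iff_irreducible_sq_not_dvd_of_ne_zero hm0]
  intro π hirr hππ
  have hπ := hirr.prime
  apply hπ.not_isUnit
  rcases hπ.exists_associated_intCast_or_isCoprime_star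
    (odd_norm_of_dvd_intCast hm (dvd_of_mul_left_dvd hππ)) with ⟨c, hc⟩ | hcop
  · have hcc : c * c ∣ m := by
      rw [← intCast_dvd_intCast (d := -1)]
      push_cast
      exact (hc.mul_mul hc).symm.dvd.trans hππ
    exact hc.symm.isUnit ((hsf c hcc).map (Int.castRingHom ℤ[i]))
  · have hstar : star π * star π ∣ (m : ℤ[i]) := by
      simpa using star_dvd_star hππ
    have hnn : π.norm * π.norm ∣ m := by
      refine (intCast_dvd_intCast (d := -1) _ _).mp ?_
      have : ((π.norm * π.norm : ℤ) : ℤ[i]) = π * π * (star π * star π) := by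
        push_cast
        rw [norm_eq_mul_conj]
        ring
      rw [this]
      exact ((hcop.mul_right hcop).mul_left (hcop.mul_right hcop)).mul_dvd hππ hstar
    rw [← norm_eq_one_iff, ← Int.isUnit_iff_natAbs_eq]
    exact hsf _ hnn

section Families

variable {ι : Type*}

def crossGcd (w : ι → ℤ[i]) (k l : ι) : ℤ[i] := EuclideanDomain.gcd (w k) (star (w l))

theorem crossGcd_dvd_left (w : ι → ℤ[i]) (k l : ι) : crossGcd w k l ∣ w k :=
  EuclideanDomain.gcd_dvd_left _ _

theorem crossGcd_dvd_star (w : ι → ℤ[i]) (k l : ι) : crossGcd w k l ∣ star (w l) :=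
  EuclideanDomain.gcd_dvd_right _ _

theorem dvd_crossGcd {w : ι → ℤ[i]} {k l : ι} {x : ℤ[i]} (hk : x ∣ w k)
    (hl : star x ∣ w l) : x ∣ crossGcd w k l :=
  EuclideanDomain.dvd_gcd hk (dvd_star_iff.mpr hl)

theorem associated_star_crossGcd (w : ι → ℤ[i]) (k l : ι) :
    Associated (star (crossGcd w k l)) (crossGcd w l k) :=
  associated_of_dvd_dvd
    (dvd_crossGcd (dvd_star_iff.mp (crossGcd_dvd_star w k l))
      (by rw [star_star]; exact crossGcd_dvd_left w k l))
    (dvd_star_iff.mpr (dvd_crossGcd (dvd_star_iff.mp (crossGcd_dvd_star w l k))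
      (by rw [star_star]; exact crossGcd_dvd_left w l k)))

variable [Fintype ι]

theorem ne_zero_of_prod_eq_natCast {β : ι → ℤ[i]} {n : ℕ} (hβ : ∏ k, β k = n) (hn : n ≠ 0)
    (k : ι) : β k ≠ 0 :=
  prod_ne_zero_iff.mp (hβ ▸ Nat.cast_ne_zero.mpr hn) k (mem_univ k)

theorem exists_prod_eq_intCast_of_natCast_mul {β w : ι → ℤ[i]} {b : ι → ℕ} {n : ℕ}
    (hβ : ∏ k, β k = n) (hb : ∀ k, 0 < b k) (hβw : ∀ k, β k = b k * w k) :
    ∃ m : ℤ, ∏ k, w k = m ∧ m ∣ n := by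
  have hB : 0 < ∏ k, b k := prod_pos fun k _ => hb k
  have h : ((∏ k, b k : ℕ) : ℤ[i]) * ∏ k, w k = n := by
    rw [Nat.cast_prod, ← prod_mul_distrib, ← hβ]
    exact prod_congr rfl fun k _ => (hβw k).symm
  rw [natCast_mul_eq] at h
  have hre := congrArg Zsqrtd.re h
  have him := congrArg Zsqrtd.im h
  simp only [re_natCast, im_natCast] at hre him
  have him0 : (∏ k, w k).im = 0 := by
    rcases mul_eq_zero.mp him with h | h
    · exact absurd h (by positivity)
    · exact h
  exact ⟨(∏ k, w k).re, Zsqrtd.ext (by simp) (by simp [him0]), Dvd.intro_left _ hre⟩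

theorem exists_prod_eq_intCast_odd_squarefree {β w : ι → ℤ[i]} {b : ι → ℕ} {n : ℕ}
    (hβ : ∏ k, β k = n) (hodd : Odd n) (hsf : Squarefree n) (hb : ∀ k, 0 < b k)
    (hβw : ∀ k, β k = b k * w k) : ∃ m : ℤ, ∏ k, w k = m ∧ Odd m ∧ Squarefree m := by
  obtain ⟨m, hwm, hmn⟩ := exists_prod_eq_intCast_of_natCast_mul hβ hb hβw
  exact ⟨m, hwm, (Int.odd_coe_nat n |>.mpr hodd).of_dvd_int hmn,
    (Int.squarefree_natCast.mpr hsf).squarefree_of_dvd hmn⟩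

variable [DecidableEq ι]

theorem isCoprime_of_squarefree_prod {w : ι → ℤ[i]} (hsq : Squarefree (∏ k, w k)) {k l : ι}
    (hkl : k ≠ l) : IsCoprime (w k) (w l) := by
  refine (IsRelPrime.of_squarefree_mul (hsq.squarefree_of_dvd ?_)).isCoprime
  rw [← prod_pair hkl]
  exact prod_dvd_prod_of_subset _ _ _ (subset_univ _)

theorem prod_crossGcd_dvd {w : ι → ℤ[i]} (hsq : Squarefree (∏ k, w k)) (k : ι) :
    ∏ l ∈ univ.erase k, crossGcd w k l ∣ w k :=
  prod_dvd_of_coprime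
    (fun l _ l' _ hll' => ((isCoprime_of_squarefree_prod hsq hll').map
      (starRingEnd ℤ[i])).of_isCoprime_of_dvd_left (crossGcd_dvd_star w k l)
        |>.of_isCoprime_of_dvd_right (crossGcd_dvd_star w k l'))
    (fun l _ => crossGcd_dvd_left w k l)

theorem prod_crossGcd_associated {w : ι → ℤ[i]} {m : ℤ} (hw : ∀ k, GIsPrimitive (w k))
    (hm : Odd m) (hsf : Squarefree m) (hwm : ∏ k, w k = m) (k : ι) :
    Associated (∏ l ∈ univ.erase k, crossGcd w k l) (w k) := by
  have hsq : Squarefree (∏ k, w k) := hwm ▸ squarefree_intCast hm hsf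
  have hwk : w k ∣ ∏ k, w k := dvd_prod_of_mem w (mem_univ k)
  obtain ⟨r, hr⟩ := prod_crossGcd_dvd hsq k
  suffices hunit : IsUnit r from ⟨hunit.unit, hr.symm⟩
  by_contra hru
  have hr0 : r ≠ 0 := by
    rintro rfl
    exact hsq.ne_zero (prod_eq_zero (mem_univ k) (by rw [hr, mul_zero]))
  obtain ⟨π, hirr, hπr⟩ := WfDvdMonoid.exists_irreducible_factor hru hr0
  have hπ := hirr.prime
  have hπw : π ∣ w k := hr ▸ dvd_mul_of_dvd_right hπr _
  -- the conjugate prime divides the rational integer `m`, hence some `w j`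
  obtain ⟨j, -, hj⟩ : ∃ j ∈ univ, star π ∣ w j := by
    refine hπ.star.exists_mem_finset_dvd ?_
    rw [hwm, ← dvd_star_iff, star_intCast, ← hwm]
    exact hπw.trans hwk
  obtain rfl | hjk := eq_or_ne j k
  · exact (hw j).not_star_dvd (odd_norm_of_dvd_intCast hm (hwm ▸ hwk)) hπ hπw hj
  · rw [hr] at hwk
    refine hπ.not_isUnit (hsq π ((mul_dvd_mul ?_ hπr).trans hwk))
    exact (dvd_crossGcd hπw hj).trans (dvd_prod_of_mem _ (mem_erase.mpr ⟨hjk, mem_univ j⟩))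

structure IsPrimaryFactorization (w : ι → ℤ[i]) (z : ι → ι → ℤ[i]) : Prop where
  diag : ∀ k, z k k = 1
  offDiag : ∀ k l, k ≠ l → GIsPrimitive (z k l) ∧ GIsPrimary (z k l) ∧ z l k = gconj (z k l)
  associated : ∀ k, Associated (∏ l ∈ univ.erase k, z k l) (w k)

variable {w : ι → ℤ[i]} {m : ℤ}

theorem exists_isPrimaryFactorization (hw : ∀ k, GIsPrimitive (w k)) (hm : Odd m)
    (hsf : Squarefree m) (hwm : ∏ k, w k = m) : ∃ z, IsPrimaryFactorization w z := by
  have hodd : ∀ k l, Odd (crossGcd w k l).norm := fun k l => odd_norm_of_dvd_intCast hm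
    ((crossGcd_dvd_left w k l).trans (hwm ▸ dvd_prod_of_mem w (mem_univ k)))
  choose p hp hprimary using fun k l => exists_associated_gIsPrimary (hodd k l)
  refine ⟨fun k l => if k = l then 1 else p k l, fun k => if_pos rfl, fun k l hkl => ?_,
    fun k => ?_⟩
  · simp only [if_neg hkl, if_neg hkl.symm, gconj_eq_star]
    refine ⟨(hw k).of_dvd ((hp k l).symm.dvd.trans (crossGcd_dvd_left w k l)), hprimary k l,
      GIsPrimary.eq_of_associated ?_ (hprimary l k) (hprimary k l).star⟩
    exact (hp l k).symm.trans ((associated_star_crossGcd w k l).symm.trans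
      ((hp k l).map (starRingEnd ℤ[i])))
  · rw [prod_congr rfl fun l hl => if_neg (ne_of_mem_erase hl).symm]
    exact (Associated.prod _ _ _ fun l _ => (hp k l).symm).trans
      (prod_crossGcd_associated hw hm hsf hwm k)

theorem IsPrimaryFactorization.associated_crossGcd {z : ι → ι → ℤ[i]}
    (hw : ∀ k, GIsPrimitive (w k)) (hm : Odd m) (hsf : Squarefree m) (hwm : ∏ k, w k = m)
    (hz : IsPrimaryFactorization w z) {k l : ι} (hkl : k ≠ l) :
    Associated (z k l) (crossGcd w k l) := by
  have hzw : ∀ i j, i ≠ j → z i j ∣ w i := fun i j hij =>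
    (dvd_prod_of_mem _ (mem_erase.mpr ⟨hij.symm, mem_univ j⟩)).trans (hz.associated i).dvd
  have hcross := prod_crossGcd_associated hw hm hsf hwm k
  refine associated_of_dvd_of_associated_prod (fun l hl => dvd_crossGcd (hzw k l ?_) ?_)
    ((hz.associated k).trans hcross.symm) (fun h => (hw k).ne_zero (hcross.eq_zero_iff.mp h))
    l (mem_erase.mpr ⟨hkl.symm, mem_univ l⟩)
  · exact (ne_of_mem_erase hl).symm
  · rw [← gconj_eq_star, ← (hz.offDiag k l (ne_of_mem_erase hl).symm).2.2]
    exact hzw l k (ne_of_mem_erase hl)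

theorem IsPrimaryFactorization.unique {z z' : ι → ι → ℤ[i]}
    (hw : ∀ k, GIsPrimitive (w k)) (hm : Odd m) (hsf : Squarefree m) (hwm : ∏ k, w k = m)
    (hz : IsPrimaryFactorization w z) (hz' : IsPrimaryFactorization w z') : z = z' := by
  funext k l
  obtain rfl | hkl := eq_or_ne k l
  · rw [hz.diag, hz'.diag]
  · exact GIsPrimary.eq_of_associated
      ((hz.associated_crossGcd hw hm hsf hwm hkl).trans
        (hz'.associated_crossGcd hw hm hsf hwm hkl).symm)
      (hz.offDiag k l hkl).2.1 (hz'.offDiag k l hkl).2.1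

structure IsDecomposition (β η : ι → ℤ[i]) (b : ι → ℕ) (z : ι → ι → ℤ[i]) : Prop where
  isUnit : ∀ k, IsUnit (η k)
  pos : ∀ k, 0 < b k
  diag : ∀ k, z k k = 1
  offDiag : ∀ k l, k ≠ l → GIsPrimitive (z k l) ∧ GIsPrimary (z k l) ∧ z l k = gconj (z k l)
  factor_eq : ∀ k, β k = η k * b k * ∏ l ∈ univ.erase k, z k l
  exists_primitive : ∀ k, ∃ w, β k = b k * w ∧ GIsPrimitive w

variable {β : ι → ℤ[i]} {n : ℕ}

theorem exists_isDecomposition (hβ : ∏ k, β k = n) (hodd : Odd n) (hsf : Squarefree n) :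
    ∃ η b z, IsDecomposition β η b z := by
  choose b hb w hw hβw using fun k =>
    exists_natCast_mul_gIsPrimitive (ne_zero_of_prod_eq_natCast hβ hsf.ne_zero k)
  obtain ⟨m, hwm, hm, hmsf⟩ := exists_prod_eq_intCast_odd_squarefree hβ hodd hsf hb hβw
  obtain ⟨z, hdiag, hoff, hzw⟩ := exists_isPrimaryFactorization hw hm hmsf hwm
  choose u hu using hzw
  refine ⟨fun k => u k, b, z, fun k => (u k).isUnit, hb, hdiag, hoff, fun k => ?_,
    fun k => ⟨w k, hβw k, hw k⟩⟩
  rw [hβw k, ← hu k]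
  ring

theorem IsDecomposition.associated_prod {η : ι → ℤ[i]} {b : ι → ℕ} {z : ι → ι → ℤ[i]}
    (hd : IsDecomposition β η b z) {k : ι} {w : ℤ[i]} (hβw : β k = b k * w) :
    Associated (∏ l ∈ univ.erase k, z k l) w := by
  refine ⟨(hd.isUnit k).unit, mul_left_cancel₀ (Nat.cast_ne_zero.mpr (hd.pos k).ne') ?_⟩
  rw [← hβw, hd.factor_eq k, IsUnit.unit_spec]
  ring

theorem IsDecomposition.unique {η η' : ι → ℤ[i]} {b b' : ι → ℕ} {z z' : ι → ι → ℤ[i]}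
    (hβ : ∏ k, β k = n) (hodd : Odd n) (hsf : Squarefree n) (hd : IsDecomposition β η b z)
    (hd' : IsDecomposition β η' b' z') : η = η' ∧ b = b' ∧ z = z' := by
  choose w hβw hw using hd.exists_primitive
  obtain rfl : b = b' := funext fun k => by
    obtain ⟨w', hβw', hw'⟩ := hd'.exists_primitive k
    rw [← gcd_re_im_natCast_mul (hw k) (b k), ← hβw, hβw', gcd_re_im_natCast_mul hw']
  obtain ⟨m, hwm, hm, hmsf⟩ := exists_prod_eq_intCast_odd_squarefree hβ hodd hsf hd.pos hβw
  obtain rfl : z = z' := IsPrimaryFactorization.unique hw hm hmsf hwm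
    ⟨hd.diag, hd.offDiag, fun k => hd.associated_prod (hβw k)⟩
    ⟨hd'.diag, hd'.offDiag, fun k => hd'.associated_prod (hβw k)⟩
  refine ⟨funext fun k => ?_, rfl, rfl⟩
  have hβk := (hd.factor_eq k).symm.trans (hd'.factor_eq k)
  simp only [mul_assoc] at hβk
  refine mul_right_cancel₀ (fun h => ?_) hβk
  exact ne_zero_of_prod_eq_natCast hβ hsf.ne_zero k (by rw [hd.factor_eq k, mul_assoc, h, mul_zero])

end Families

theorem IsDecomposition.prod_units_eq_one {β η : Fin 4 → ℤ[i]} {b : Fin 4 → ℕ}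
    {z : Fin 4 → Fin 4 → ℤ[i]} {n : ℕ} (hd : IsDecomposition β η b z)
    (hβ : β 0 * β 1 * β 2 * β 3 = n) (hn : 0 < n) : η 0 * η 1 * η 2 * η 3 = 1 := by
  obtain ⟨hη, -, hdiag, hoff, hform, -⟩ := hd
  have hconj : ∀ k l, k < l → z l k = star (z k l) := fun k l hkl => (hoff k l hkl.ne).2.2
  have key : ((η 0 * η 1 * η 2 * η 3) * ((b 0 * b 1 * b 2 * b 3 : ℕ) *
      ((z 0 1).norm * (z 0 2).norm * (z 0 3).norm * (z 1 2).norm * (z 1 3).norm *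
        (z 2 3).norm) : ℤ) : ℤ[i]) = n := by
    rw [← hβ, hform 0, hform 1, hform 2, hform 3]
    simp only [prod_erase _ (hdiag _), Fin.prod_univ_four, hdiag]
    rw [hconj 0 1 (by decide), hconj 0 2 (by decide), hconj 0 3 (by decide),
      hconj 1 2 (by decide), hconj 1 3 (by decide), hconj 2 3 (by decide)]
    push_cast
    simp only [norm_eq_mul_conj]
    ring
  refine eq_one_of_isUnit_of_mul_intCast_eq (((hη 0).mul (hη 1)).mul (hη 2) |>.mul (hη 3))
    (mul_nonneg (Nat.cast_nonneg _) ?_) (Int.natCast_pos.mpr hn) (by exact_mod_cast key)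
  have := GaussianInt.norm_nonneg
  apply_rules [mul_nonneg]

end GaussianInt

open GaussianInt in
theorem stmt8_general (n : ℕ) (hodd : Odd n) (hsf : Squarefree n)
    (β : Fin 4 → GaussianInt)
    (hβ : (n : GaussianInt) = β 0 * β 1 * β 2 * β 3) :
    ∃! d : (Fin 4 → GaussianInt) × (Fin 4 → ℕ) × (Fin 4 → Fin 4 → GaussianInt),
      (∀ k, IsUnit (d.1 k)) ∧
      d.1 0 * d.1 1 * d.1 2 * d.1 3 = 1 ∧
      (∀ k, 0 < d.2.1 k) ∧
      (∀ k, d.2.2 k k = 1) ∧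
      (∀ k l, k ≠ l → GIsPrimitive (d.2.2 k l) ∧ GIsPrimary (d.2.2 k l) ∧
        d.2.2 l k = gconj (d.2.2 k l)) ∧
      (∀ k, β k = d.1 k * (d.2.1 k : GaussianInt) *
        ∏ l ∈ Finset.univ.erase k, d.2.2 k l) ∧
      (∀ k, ∃ w : GaussianInt,
        β k = (d.2.1 k : GaussianInt) * w ∧ GIsPrimitive w) := by
  have hprod : ∏ k, β k = n := by rw [Fin.prod_univ_four, hβ]
  obtain ⟨η, b, z, hd⟩ := exists_isDecomposition hprod hodd hsf
  have hη := hd.prod_units_eq_one hβ.symm (Nat.pos_of_ne_zero hsf.ne_zero)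
  obtain ⟨h1, h2, h3, h4, h5, h6⟩ := hd
  refine ⟨(η, b, z), ⟨h1, hη, h2, h3, h4, h5, h6⟩, ?_⟩
  rintro ⟨η', b', z'⟩ ⟨h1', -, h2', h3', h4', h5', h6'⟩
  obtain ⟨rfl, rfl, rfl⟩ :=
    IsDecomposition.unique hprod hodd hsf ⟨h1', h2', h3', h4', h5', h6'⟩ ⟨h1, h2, h3, h4, h5, h6⟩
  rfl

/-- Decomposition lemma: if `n ≥ 1` is odd squarefree and `n = β₀β₁β₂β₃` in
`ℤ[i]`, then there are unique units `η_k` with product `1`, positive integers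
`b_k`, and primitive primary Gaussian integers `z_{kℓ}` (`k ≠ ℓ`) with
`z_{ℓk} = conj z_{kℓ}`, such that `β_k = η_k b_k ∏_{ℓ≠k} z_{kℓ}` and
`β_k / b_k` is primitive, for each `k`. -/
theorem stmt8 (n : ℕ) (hn : 0 < n) (hodd : Odd n) (hsf : Squarefree n)
    (β : Fin 4 → GaussianInt)
    (hβ : (n : GaussianInt) = β 0 * β 1 * β 2 * β 3) :
    ∃! d : (Fin 4 → GaussianInt) × (Fin 4 → ℕ) × (Fin 4 → Fin 4 → GaussianInt),
      (∀ k, IsUnit (d.1 k)) ∧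
      d.1 0 * d.1 1 * d.1 2 * d.1 3 = 1 ∧
      (∀ k, 0 < d.2.1 k) ∧
      (∀ k, d.2.2 k k = 1) ∧
      (∀ k l, k ≠ l → GIsPrimitive (d.2.2 k l) ∧ GIsPrimary (d.2.2 k l) ∧
        d.2.2 l k = gconj (d.2.2 k l)) ∧
      (∀ k, β k = d.1 k * (d.2.1 k : GaussianInt) *
        ∏ l ∈ Finset.univ.erase k, d.2.2 k l) ∧
      (∀ k, ∃ w : GaussianInt,
        β k = (d.2.1 k : GaussianInt) * w ∧ GIsPrimitive w) :=
  stmt8_general n hodd hsf β hβ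
end

section
/- Let β be an odd Gaussian integer and η a unit of ℤ[i]. Then the quadratic residue symbol satisfies [α/(ηβ)] = [α/β] for all α ∈ ℤ[i], and [1/β] = [-1/β] = 1, and [i/β] = [-i/β] equals 1 if N(β) ≡ 1 (mod 8) and -1 if N(β) ≡ 5 (mod 8). -/
/-- The quadratic residue symbol `[α/π]` for an irreducible odd Gaussian `π`:
`0` if `π ∣ α`, `1` if `α` is a nonzero square mod `π`, `-1` otherwise. -/
noncomputable def gQR (α π : GaussianInt) : ℤ := by
  classical
  exact if π ∣ α then 0 else if ∃ β : GaussianInt, π ∣ (β ^ 2 - α) then 1 else -1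

/-- The quadratic residue symbol `[α/β]`, extended multiplicatively in the
denominator over a factorization of `β` into irreducibles. -/
noncomputable def gSym (α β : GaussianInt) : ℤ :=
  ((UniqueFactorizationMonoid.factors β).map fun π => gQR α π).prod

/-! `[α/π]` depends on `π` only up to associates, so `[α/β]` is unchanged when `β` is multiplied
by a unit. The numerators `1` and `-1 = i²` are squares, and `-i = i² · i`. For an odd prime `π`
the residue field `ℤ[i]/(π)` has `q = N(π)` elements and contains `i`, of order 4, so
`q ≡ 1 (mod 4)`, and `i` is a square iff `8 ∣ q - 1`. Hence `[i/π] = χ₈(N(π))`, and since `χ₈` and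
the norm are multiplicative, `[i/β] = χ₈(N(β))`. -/

local notation "ℤ[i]" => GaussianInt

open UniqueFactorizationMonoid ZMod

open Classical in
theorem FiniteField.χ₈_card_eq_ite_isSquare {F : Type*} [Field F] [Fintype F]
    (hF : ringChar F ≠ 2) {u : F} (hu : u ^ 2 = -1) :
    χ₈ (Fintype.card F) = if IsSquare u then 1 else -1 := by
  have hu0 : u ≠ 0 := by rintro rfl; simp at hu
  have horder : orderOf u = 4 :=
    orderOf_eq_prime_pow (p := 2) (n := 1)
      (by rw [pow_one, hu]; exact Ring.neg_one_ne_one_of_char_ne_two hF)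
      (by rw [show 2 ^ (1 + 1) = 2 * 2 from rfl, pow_mul, hu, neg_one_sq])
  have hcard : 4 ∣ Fintype.card F - 1 :=
    horder ▸ orderOf_dvd_of_pow_eq_one (FiniteField.pow_card_sub_one_eq_one u hu0)
  have hsq : IsSquare u ↔ 4 ∣ Fintype.card F / 2 := by
    rw [FiniteField.isSquare_iff hF hu0, ← horder, orderOf_dvd_iff_pow_eq_one]
  have hodd := FiniteField.odd_card_of_char_ne_two hF
  rw [χ₈_nat_eq_if_mod_eight]
  simp only [hsq]
  split_ifs <;> omega

namespace GaussianInt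

noncomputable def basisReIm : Module.Basis (Fin 2) ℤ ℤ[i] := Module.Basis.ofEquivFun
  { toFun := fun z => ![z.re, z.im]
    invFun := fun f => ⟨f 0, f 1⟩
    left_inv := fun z => by simp
    right_inv := fun f => by ext i; fin_cases i <;> simp
    map_add' := fun x y => by ext i; fin_cases i <;> simp
    map_smul' := fun n x => by ext i; fin_cases i <;> simp }

instance : Module.Free ℤ ℤ[i] := .of_basis basisReIm
instance : Module.Finite ℤ ℤ[i] := .of_basis basisReIm

theorem algebraNorm_eq_norm (x : ℤ[i]) : Algebra.norm ℤ x = x.norm := by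
  rw [Algebra.norm_eq_matrix_det basisReIm, Matrix.det_fin_two]
  simp [Algebra.leftMulMatrix_eq_repr_mul, Module.Basis.ofEquivFun_repr_apply,
    Module.Basis.coe_ofEquivFun, basisReIm, Zsqrtd.norm]

theorem natCard_quotient_span_singleton (π : ℤ[i]) :
    Nat.card (ℤ[i] ⧸ Ideal.span {π}) = π.norm.natAbs := by
  rw [← Submodule.cardQuot_apply, ← Ideal.absNorm_apply, Ideal.absNorm_span_singleton,
    algebraNorm_eq_norm]

theorem irreducible_one_add_I : Irreducible (⟨1, 1⟩ : ℤ[i]) := by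
  refine ⟨fun h => absurd (Zsqrtd.norm_eq_one_iff.2 h) (by decide), fun a b hab => ?_⟩
  have hnorm : a.norm.natAbs * b.norm.natAbs = 2 := by
    rw [← Int.natAbs_mul, ← Zsqrtd.norm_mul, ← hab]; rfl
  rcases Nat.prime_two.eq_one_or_self_of_dvd _ ⟨_, hnorm.symm⟩ with ha | ha
  · exact .inl (Zsqrtd.norm_eq_one_iff.1 ha)
  · exact .inr (Zsqrtd.norm_eq_one_iff.1 (by rw [ha] at hnorm; omega))

theorem not_dvd_two_of_not_one_add_I_dvd {π : ℤ[i]} (hπ : Prime π)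
    (hodd : ¬ (⟨1, 1⟩ : ℤ[i]) ∣ π) : ¬ π ∣ 2 := by
  intro h
  have hsq : (⟨1, 1⟩ : ℤ[i]) ^ 2 = 2 * ⟨0, 1⟩ := by decide
  have hπ_dvd : π ∣ ⟨1, 1⟩ := hπ.dvd_of_dvd_pow (hsq ▸ h.mul_right _)
  exact hodd (hπ.irreducible.associated_of_dvd irreducible_one_add_I hπ_dvd).symm.dvd

theorem isUnit_I : IsUnit (⟨0, 1⟩ : ℤ[i]) := Zsqrtd.norm_eq_one_iff.1 (by decide)

end GaussianInt

open GaussianInt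

theorem exists_dvd_sq_sub_iff_isSquare_mk {R : Type*} [CommRing R] (π α : R) :
    (∃ b : R, π ∣ b ^ 2 - α) ↔ IsSquare (Ideal.Quotient.mk (Ideal.span {π}) α) := by
  simp only [IsSquare, Ideal.Quotient.mk_surjective.exists, ← map_mul,
    eq_comm (a := Ideal.Quotient.mk _ α), Ideal.Quotient.mk_eq_mk_iff_sub_mem,
    Ideal.mem_span_singleton, sq]

theorem gQR_congr {α α' π π' : ℤ[i]} (hdvd : π ∣ α ↔ π' ∣ α')
    (hsq : (∃ b : ℤ[i], π ∣ b ^ 2 - α) ↔ ∃ b : ℤ[i], π' ∣ b ^ 2 - α') : gQR α π = gQR α' π' := by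
  classical exact if_congr hdvd rfl (if_congr hsq rfl rfl)

open Classical in
theorem gQR_eq_ite_isSquare {π α : ℤ[i]} (hα : ¬ π ∣ α) :
    gQR α π = if IsSquare (Ideal.Quotient.mk (Ideal.span {π}) α) then 1 else -1 :=
  (if_neg hα).trans (if_congr (exists_dvd_sq_sub_iff_isSquare_mk π α) rfl rfl)

theorem gQR_congr_right {π π' : ℤ[i]} (h : Associated π π') (α : ℤ[i]) : gQR α π = gQR α π' :=
  gQR_congr h.dvd_iff_dvd_left (exists_congr fun _ => h.dvd_iff_dvd_left)

theorem gQR_one {π : ℤ[i]} (hπ : ¬ IsUnit π) : gQR 1 π = 1 := by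
  rw [gQR, if_neg (mt isUnit_of_dvd_one hπ), if_pos ⟨1, by simp⟩]

theorem gQR_unit_sq_mul {u : ℤ[i]} (hu : IsUnit u) (α π : ℤ[i]) :
    gQR (u ^ 2 * α) π = gQR α π := by
  obtain ⟨v, rfl⟩ := hu
  have hrescale (b : ℤ[i]) : (v * b) ^ 2 - v ^ 2 * α = ↑(v ^ 2) * (b ^ 2 - α) := by
    push_cast; ring
  have hsolvable : (∃ b : ℤ[i], π ∣ b ^ 2 - v ^ 2 * α) ↔ ∃ b : ℤ[i], π ∣ b ^ 2 - α :=
    ⟨fun ⟨b, hb⟩ => ⟨↑v⁻¹ * b, by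
        rwa [← Units.dvd_mul_left (u := v ^ 2), ← hrescale, Units.mul_inv_cancel_left]⟩,
      fun ⟨b, hb⟩ => ⟨v * b, by rwa [hrescale, Units.dvd_mul_left]⟩⟩
  exact gQR_congr (by rw [← Units.val_pow_eq_pow_val, Units.dvd_mul_left]) hsolvable

theorem gQR_I_eq_χ₈_norm {π : ℤ[i]} (hπ : Prime π) (hodd : ¬ (⟨1, 1⟩ : ℤ[i]) ∣ π) :
    gQR ⟨0, 1⟩ π = χ₈ π.norm := by
  set Q := ℤ[i] ⧸ Ideal.span {π}
  have : (Ideal.span {π}).IsMaximal := PrincipalIdealRing.isMaximal_of_irreducible hπ.irreducible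
  let : Field Q := Ideal.Quotient.field _
  have hcard : Nat.card Q = π.norm.natAbs := natCard_quotient_span_singleton π
  have : Fintype Q := @Fintype.ofFinite Q (Nat.finite_of_card_ne_zero (by
    rw [hcard, Int.natAbs_ne_zero, Ne, GaussianInt.norm_eq_zero]; exact hπ.ne_zero))
  have hchar : ringChar Q ≠ 2 := fun h2 => not_dvd_two_of_not_one_add_I_dvd hπ hodd <| by
    rw [← Ideal.mem_span_singleton, ← Ideal.Quotient.eq_zero_iff_mem, map_ofNat]
    exact_mod_cast (ringChar.spec Q 2).mpr (h2 ▸ dvd_rfl)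
  have hi : Ideal.Quotient.mk (Ideal.span {π}) ⟨0, 1⟩ ^ 2 = -1 := by
    rw [← map_pow, show (⟨0, 1⟩ : ℤ[i]) ^ 2 = -1 by decide, map_neg, map_one]
  have hnorm : (π.norm : ZMod 8) = (Fintype.card Q : ℕ) := by
    rw [Fintype.card_eq_nat_card, hcard, natCast_natAbs_norm]
  rw [hnorm, FiniteField.χ₈_card_eq_ite_isSquare hchar hi,
    gQR_eq_ite_isSquare fun h => hπ.not_isUnit (isUnit_of_dvd_unit h isUnit_I)]
  -- the two sides differ only in the multiplication of `Q` (field vs. quotient ring)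
  congr 1

theorem gSym_congr_right {β β' : ℤ[i]} (h : Associated β β') (α : ℤ[i]) : gSym α β = gSym α β' := by
  unfold gSym
  congr 1
  exact Multiset.rel_eq.mp <| Multiset.rel_map.mpr <|
    (factors_rel_of_associated h).mono fun _ _ _ _ hπ => gQR_congr_right hπ α

theorem gSym_one (β : ℤ[i]) : gSym 1 β = 1 :=
  Multiset.prod_eq_one fun _ hx => by
    obtain ⟨π, hπ, rfl⟩ := Multiset.mem_map.mp hx
    exact gQR_one (irreducible_of_factor π hπ).not_isUnit

theorem gSym_unit_sq_mul {u : ℤ[i]} (hu : IsUnit u) (α β : ℤ[i]) :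
    gSym (u ^ 2 * α) β = gSym α β := by
  simp only [gSym, gQR_unit_sq_mul hu]

theorem gSym_I_eq_χ₈_norm {β : ℤ[i]} (hodd : ¬ (⟨1, 1⟩ : ℤ[i]) ∣ β) :
    gSym ⟨0, 1⟩ β = χ₈ β.norm := by
  have hβ : β ≠ 0 := by rintro rfl; exact hodd (dvd_zero _)
  let χN : ℤ[i] →* ℤ :=
    χ₈.toMonoidHom.comp ((Int.castRingHom (ZMod 8)).toMonoidHom.comp Zsqrtd.normMonoidHom)
  calc gSym ⟨0, 1⟩ β = ((factors β).map χN).prod := by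
        refine congrArg Multiset.prod (Multiset.map_congr rfl fun π hπ => ?_)
        exact gQR_I_eq_χ₈_norm (prime_of_factor π hπ)
          fun h => hodd (h.trans (dvd_of_mem_factors hπ))
    _ = χN (factors β).prod := (map_multiset_prod χN _).symm
    _ = χ₈ β.norm := by
        rw [← Zsqrtd.norm_eq_of_associated (by norm_num) (factors_prod hβ)]; rfl

/-- For `β` an odd Gaussian integer and `η` a unit of `ℤ[i]`:
`[α/(ηβ)] = [α/β]` for all `α`; `[1/β] = [-1/β] = 1`; and
`[i/β] = [-i/β]` equals `1` if `N(β) ≡ 1 (mod 8)` and `-1` if `N(β) ≡ 5 (mod 8)`. -/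
theorem stmt9 (β : GaussianInt) (hodd : ¬ (⟨1, 1⟩ : GaussianInt) ∣ β)
    (η : GaussianInt) (hη : IsUnit η) :
    (∀ α : GaussianInt, gSym α (η * β) = gSym α β) ∧
    gSym 1 β = 1 ∧ gSym (-1) β = 1 ∧
    gSym ⟨0, 1⟩ β = gSym ⟨0, -1⟩ β ∧
    (β.norm % 8 = 1 → gSym ⟨0, 1⟩ β = 1) ∧
    (β.norm % 8 = 5 → gSym ⟨0, 1⟩ β = -1) := by
  have hneg_one : (-1 : ℤ[i]) = ⟨0, 1⟩ ^ 2 * 1 := by decide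
  have hneg_I : (⟨0, -1⟩ : ℤ[i]) = ⟨0, 1⟩ ^ 2 * ⟨0, 1⟩ := by decide
  refine ⟨fun α => gSym_congr_right (associated_unit_mul_left β η hη) α, gSym_one β, ?_, ?_,
    fun h => ?_, fun h => ?_⟩
  · rw [hneg_one, gSym_unit_sq_mul isUnit_I, gSym_one]
  · rw [hneg_I, gSym_unit_sq_mul isUnit_I]
  all_goals rw [gSym_I_eq_χ₈_norm hodd, χ₈_int_eq_if_mod_eight]; simp [h]; omega
end

section
/- Let π ∈ ℤ[i] be an irreducible element with π·π̄ = p an odd rational prime. Then for every integer n ∈ ℤ, the Gaussian quadratic residue symbol [n/π] equals the Legendre symbol (n/p). -/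
/-! Since `π π̄ = p`, the residue ring `ℤ[i]/(π)` is `𝔽_p`: an integer is divisible by `π`
exactly when it is divisible by `p` (take norms), and writing `π = a + b i` with `p ∤ b`, every
Gaussian integer is congruent mod `π` to an integer because `i ≡ -a b⁻¹`. Both conditions
defining `[n/π]` are therefore the corresponding conditions on `n` in `ZMod p`. -/

theorem Ideal.Quotient.isSquare_mk_span_singleton_iff {R : Type*} [CommRing R] (π α : R) :
    IsSquare (Ideal.Quotient.mk (Ideal.span {π}) α) ↔ ∃ β, π ∣ β ^ 2 - α := by
  simp only [IsSquare, Ideal.Quotient.mk_surjective.exists, ← map_mul, Ideal.Quotient.eq,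
    Ideal.mem_span_singleton, sq, dvd_sub_comm]

namespace GaussianInt

variable {π : GaussianInt} {p : ℕ}

theorem norm_eq_of_mul_star_eq {n : ℤ} (h : π * star π = n) : π.norm = n := by
  rw [← Zsqrtd.norm_eq_mul_conj] at h
  exact_mod_cast h

theorem not_dvd_im_of_norm_eq_prime (hp : p.Prime) (hπ : π.norm = p) : ¬ (p : ℤ) ∣ π.im := by
  intro hb
  have hnorm : π.norm = π.re ^ 2 + π.im ^ 2 := by rw [Zsqrtd.norm_def]; ring
  have ha : (p : ℤ) ∣ π.re := Int.Prime.dvd_pow' (k := 2) hp <| by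
    rw [show π.re ^ 2 = π.norm - π.im ^ 2 by rw [hnorm]; ring, hπ]
    exact dvd_sub dvd_rfl (dvd_pow hb two_ne_zero)
  have hsq : (p : ℤ) ^ 2 ∣ π.norm := by
    rw [hnorm]
    exact dvd_add (pow_dvd_pow_of_dvd ha 2) (pow_dvd_pow_of_dvd hb 2)
  rw [hπ] at hsq
  have := Int.le_of_dvd (by exact_mod_cast hp.pos) hsq
  nlinarith [hp.two_le]

theorem dvd_intCast_iff (hp : p.Prime) (hπ : π.norm = p) (m : ℤ) :
    π ∣ (m : GaussianInt) ↔ (p : ℤ) ∣ m := by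
  constructor
  · rintro ⟨c, hc⟩
    have h := congrArg Zsqrtd.norm hc
    rw [Zsqrtd.norm_intCast, Zsqrtd.norm_mul, hπ] at h
    exact Int.Prime.dvd_mul' hp ⟨_, h⟩ |>.elim id id
  · intro h
    have hπp : π ∣ ((p : ℤ) : GaussianInt) := ⟨star π, by rw [← Zsqrtd.norm_eq_mul_conj, hπ]⟩
    exact hπp.trans (Int.cast_dvd_cast _ _ h)

theorem exists_intCast_dvd_sub (hp : p.Prime) (hπ : π.norm = p) (z : GaussianInt) :
    ∃ m : ℤ, π ∣ z - m := by
  obtain ⟨u, v, huv⟩ : IsCoprime (p : ℤ) π.im :=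
    (Prime.coprime_iff_not_dvd (Nat.prime_iff_prime_int.mp hp)).mpr
      (not_dvd_im_of_norm_eq_prime hp hπ)
  set i : GaussianInt := Zsqrtd.sqrtd
  have hz : z = z.re + i * z.im := Zsqrtd.decompose
  have hπ' : π = π.re + i * π.im := Zsqrtd.decompose
  have hp' : ((p : ℤ) : GaussianInt) = π * star π := by rw [← hπ, Zsqrtd.norm_eq_mul_conj]
  have huv' : (u : GaussianInt) * p + v * π.im = 1 := by exact_mod_cast congrArg Int.cast huv
  refine ⟨z.re - z.im * π.re * v, z.im * (v + u * star π * i), ?_⟩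
  push_cast
  linear_combination hz - z.im * v * hπ' + z.im * i * u * hp' - z.im * i * huv'

noncomputable def residueRingEquiv (hp : p.Prime) (hπ : π.norm = p) :
    ZMod p ≃+* GaussianInt ⧸ Ideal.span {π} :=
  have hker : RingHom.ker (Int.castRingHom (GaussianInt ⧸ Ideal.span {π})) =
      Ideal.span {(p : ℤ)} := by
    ext m
    rw [RingHom.mem_ker, Ideal.mem_span_singleton, eq_intCast,
      ← map_intCast (Ideal.Quotient.mk (Ideal.span {π})), Ideal.Quotient.eq_zero_iff_dvd,
      dvd_intCast_iff hp hπ]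
  have hsurj : Function.Surjective (Int.castRingHom (GaussianInt ⧸ Ideal.span {π})) := by
    refine Ideal.Quotient.mk_surjective.forall.mpr fun z => ?_
    obtain ⟨m, hm⟩ := exists_intCast_dvd_sub hp hπ z
    exact ⟨m, by rw [eq_intCast, ← map_intCast (Ideal.Quotient.mk (Ideal.span {π})), eq_comm,
      Ideal.Quotient.mk_eq_mk_iff_sub_mem, Ideal.mem_span_singleton]; exact hm⟩
  (Int.quotientSpanNatEquivZMod p).symm.trans <|
    (Ideal.quotEquivOfEq hker.symm).trans (RingHom.quotientKerEquivOfSurjective hsurj)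

theorem exists_dvd_sq_sub_intCast_iff (hp : p.Prime) (hπ : π.norm = p) (n : ℤ) :
    (∃ β : GaussianInt, π ∣ β ^ 2 - n) ↔ IsSquare (n : ZMod p) := by
  let e := residueRingEquiv hp hπ
  have he : e n = Ideal.Quotient.mk (Ideal.span {π}) n := by simp only [map_intCast]
  rw [← Ideal.Quotient.isSquare_mk_span_singleton_iff, ← he]
  exact ⟨fun h => by simpa using h.map e.symm, fun h => h.map e⟩

end GaussianInt

theorem stmt10_general (p : ℕ) (hp : p.Prime) (π : GaussianInt)
    (hpi : π * gconj π = (p : GaussianInt)) :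
    ∀ n : ℤ, gQR (n : GaussianInt) π = @legendreSym p ⟨hp⟩ n := by
  have : Fact p.Prime := ⟨hp⟩
  intro n
  have hπ : π.norm = p := GaussianInt.norm_eq_of_mul_star_eq (by exact_mod_cast hpi)
  have hzero := (GaussianInt.dvd_intCast_iff hp hπ n).trans
    (ZMod.intCast_zmod_eq_zero_iff_dvd n p).symm
  have hsq := GaussianInt.exists_dvd_sq_sub_intCast_iff hp hπ n
  unfold gQR
  split_ifs with h0 h1
  · exact ((legendreSym.eq_zero_iff p n).mpr (hzero.mp h0)).symm
  · exact ((legendreSym.eq_one_iff p (hzero.not.mp h0)).mpr (hsq.mp h1)).symm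
  · exact ((legendreSym.eq_neg_one_iff p).mpr (hsq.not.mp h1)).symm

/-- If `π ∈ ℤ[i]` is irreducible with `π·π̄ = p` an odd rational prime, then
for every `n ∈ ℤ` the Gaussian quadratic residue symbol `[n/π]` equals the
Legendre symbol `(n/p)`. -/
theorem stmt10 (p : ℕ) (hp : p.Prime) (hp2 : p ≠ 2) (π : GaussianInt)
    (hirr : Irreducible π) (hpi : π * gconj π = (p : GaussianInt)) :
    ∀ n : ℤ, gQR (n : GaussianInt) π = @legendreSym p ⟨hp⟩ n :=
  stmt10_general p hp π hpi
end

section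
/- If a and b are positive integers with gcd(2a, b) = 1, then the Gaussian quadratic residue symbol [a/b] equals 1. -/
section helpers

lemma gQR_assoc {α π π' : GaussianInt} (h : Associated π π') : gQR α π = gQR α π' := by
  have h1 : π ∣ α ↔ π' ∣ α := ⟨fun hd => h.dvd_iff_dvd_left.mp hd, fun hd => h.dvd_iff_dvd_left.mpr hd⟩
  have h2 : (∃ β : GaussianInt, π ∣ (β ^ 2 - α)) ↔ (∃ β : GaussianInt, π' ∣ (β ^ 2 - α)) :=
    exists_congr fun β => h.dvd_iff_dvd_left
  unfold gQR
  by_cases hd : π ∣ α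
  · rw [if_pos hd, if_pos (h1.mp hd)]
  · rw [if_neg hd, if_neg (fun c => hd (h1.mpr c))]
    by_cases he : ∃ β : GaussianInt, π ∣ (β ^ 2 - α)
    · rw [if_pos he, if_pos (h2.mp he)]
    · rw [if_neg he, if_neg (fun c => he (h2.mpr c))]

lemma prod_map_gQR_eq {α : GaussianInt} {s t : Multiset GaussianInt}
    (h : Multiset.Rel Associated s t) :
    ((s.map fun π => gQR α π).prod) = ((t.map fun π => gQR α π).prod) := by
  have : Multiset.Rel Eq (s.map fun π => gQR α π) (t.map fun π => gQR α π) := by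
    rw [Multiset.rel_map]
    exact h.mono fun a _ b _ hab => gQR_assoc hab
  rw [Multiset.rel_eq.mp this]

lemma gSym_mul {α x y : GaussianInt} (hx : x ≠ 0) (hy : y ≠ 0) :
    gSym α (x * y) = gSym α x * gSym α y := by
  unfold gSym
  rw [prod_map_gQR_eq (UniqueFactorizationMonoid.factors_mul hx hy), Multiset.map_add,
    Multiset.prod_add]

lemma gSym_irreducible {α π : GaussianInt} (hπ : Irreducible π) :
    gSym α π = gQR α π := by
  have hrel : Multiset.Rel Associated (UniqueFactorizationMonoid.factors π) {π} := by
    refine UniqueFactorizationMonoid.factors_unique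
      (fun _ hx => UniqueFactorizationMonoid.irreducible_of_factor _ hx)
      (fun x hx => ?_) ?_
    · rw [Multiset.mem_singleton] at hx; subst hx; exact hπ
    · simpa using UniqueFactorizationMonoid.factors_prod hπ.ne_zero
  unfold gSym
  rw [prod_map_gQR_eq hrel]
  simp

lemma gSym_one_s11 (α : GaussianInt) : gSym α 1 = 1 := by
  unfold gSym
  rw [UniqueFactorizationMonoid.factors_one]
  simp

end helpers



section numtheory

open GaussianInt

/-- A Gaussian integer with prime norm is prime. -/
lemma gi_prime_of_norm_prime {π : GaussianInt} (h : (Zsqrtd.norm π).natAbs.Prime) :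
    Prime π := by
  rw [← UniqueFactorizationMonoid.irreducible_iff_prime]
  constructor
  · intro hu
    rw [← Zsqrtd.norm_eq_one_iff] at hu
    rw [hu] at h
    exact Nat.not_prime_one h
  · intro x y hxy
    have hn : (Zsqrtd.norm x).natAbs * (Zsqrtd.norm y).natAbs = (Zsqrtd.norm π).natAbs := by
      rw [← Int.natAbs_mul, ← Zsqrtd.norm_mul, ← hxy]
    rcases h.eq_one_or_self_of_dvd (Zsqrtd.norm x).natAbs ⟨_, hn.symm⟩ with h1 | h1
    · exact Or.inl (Zsqrtd.norm_eq_one_iff.mp h1)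
    · refine Or.inr (Zsqrtd.norm_eq_one_iff.mp ?_)
      have hp0 : (Zsqrtd.norm π).natAbs ≠ 0 := h.ne_zero
      rw [h1] at hn
      exact Nat.eq_of_mul_eq_mul_left (Nat.pos_of_ne_zero hp0) (by rw [hn, mul_one])

/-- If `p ∤ a` in `ℕ` with `p` prime, then `(p : ℤ[i]) ∤ (a : ℤ[i])`. -/
lemma gi_nat_prime_not_dvd {p a : ℕ} (hp : p.Prime) (hpa : ¬ p ∣ a) :
    ¬ ((p : GaussianInt) ∣ (a : GaussianInt)) := by
  intro ⟨c, hc⟩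
  have hnorm : (Zsqrtd.norm (a : GaussianInt)) = Zsqrtd.norm (p : GaussianInt) * Zsqrtd.norm c := by
    rw [hc, Zsqrtd.norm_mul]
  rw [Zsqrtd.norm_natCast, Zsqrtd.norm_natCast] at hnorm
  have : (p : ℤ) ∣ (a : ℤ) * (a : ℤ) := ⟨(p : ℤ) * Zsqrtd.norm c, by linarith⟩
  have hpz : Prime (p : ℤ) := Nat.prime_iff_prime_int.mp hp
  rcases hpz.dvd_mul.mp this with h | h <;>
    exact hpa (Int.ofNat_dvd.mp (by exact_mod_cast h))

end numtheory

section euler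

/-- `p ∣ a^((p-1)/2) - 1` or `p ∣ a^((p-1)/2) + 1` in `ℤ` (Euler). -/
lemma euler_pm {p a : ℕ} (hp : p.Prime) (hodd : p % 2 = 1) (hpa : ¬ p ∣ a) :
    (p : ℤ) ∣ (a : ℤ) ^ ((p - 1) / 2) - 1 ∨ (p : ℤ) ∣ (a : ℤ) ^ ((p - 1) / 2) + 1 := by
  haveI : Fact p.Prime := ⟨hp⟩
  have ha0 : (a : ZMod p) ≠ 0 := by
    rwa [Ne, ZMod.natCast_eq_zero_iff]
  have hferm : (a : ZMod p) ^ (p - 1) = 1 := ZMod.pow_card_sub_one_eq_one ha0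
  have h2 : 2 * ((p - 1) / 2) = p - 1 := by omega
  have hdvd : (p : ℤ) ∣ ((a : ℤ) ^ ((p - 1) / 2) - 1) * ((a : ℤ) ^ ((p - 1) / 2) + 1) := by
    have hx : (a : ℤ) ^ (p - 1) = ((a : ℤ) ^ ((p - 1) / 2)) ^ 2 := by
      rw [← pow_mul]
      congr 1
      omega
    have : ((a : ℤ) ^ ((p - 1) / 2) - 1) * ((a : ℤ) ^ ((p - 1) / 2) + 1)
        = (a : ℤ) ^ (p - 1) - 1 := by
      rw [hx]
      ring
    rw [this, ← ZMod.intCast_zmod_eq_zero_iff_dvd]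
    push_cast
    rw [hferm]
    ring
  exact (Nat.prime_iff_prime_int.mp hp).dvd_mul.mp hdvd

/-- In the inert case `p ≡ 3 (mod 4)`, every integer prime to `p` is a square
mod `p` in `ℤ[i]`. -/
lemma exists_sqrt_inert {p a : ℕ} (hp : p.Prime) (hp3 : p % 4 = 3) (hpa : ¬ p ∣ a) :
    ∃ β : GaussianInt, (p : GaussianInt) ∣ β ^ 2 - (a : GaussianInt) := by
  set m := (p - 1) / 2 with hm
  set k := (p + 1) / 4 with hk
  have h2k : 2 * k = m + 1 := by
    have := hp.two_le
    omega
  have key : ∀ x : ℤ, (p : ℤ) ∣ x → (p : GaussianInt) ∣ (x : GaussianInt) := by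
    intro x hx
    have := map_dvd (Int.castRingHom GaussianInt) hx
    simpa using this
  rcases euler_pm hp (by omega) hpa with h | h
  · refine ⟨(a : GaussianInt) ^ k, ?_⟩
    have hdvd : (p : ℤ) ∣ (a : ℤ) ^ (2 * k) - (a : ℤ) := by
      have heq : (a : ℤ) ^ (2 * k) - (a : ℤ) = ((a : ℤ) ^ m - 1) * a := by
        rw [h2k, pow_succ]
        ring
      rw [heq]
      exact h.mul_right _
    have := key _ hdvd
    push_cast at this ⊢
    convert this using 2
    rw [← pow_mul, mul_comm k 2]
  · refine ⟨(⟨0, 1⟩ : GaussianInt) * (a : GaussianInt) ^ k, ?_⟩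
    have hi2 : (⟨0, 1⟩ : GaussianInt) ^ 2 = -1 := by
      rw [pow_two]
      rfl
    have hdvd : (p : ℤ) ∣ -((a : ℤ) ^ (2 * k)) - (a : ℤ) := by
      have : -((a : ℤ) ^ (2 * k)) - (a : ℤ) = -((a:ℤ) * ((a:ℤ) ^ m + 1)) := by
        rw [h2k, pow_succ]
        ring
      rw [this]
      exact (dvd_neg).mpr (h.mul_left _)
    have := key _ hdvd
    rw [mul_pow, hi2]
    convert this using 2
    push_cast
    rw [← pow_mul, mul_comm k 2]
    ring

end euler

section star

lemma gQR_star_natCast (a : ℕ) (π : GaussianInt) :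
    gQR (a : GaussianInt) (star π) = gQR (a : GaussianInt) π := by
  have hstar : ∀ x y : GaussianInt, x ∣ y ↔ star x ∣ star y := by
    intro x y
    constructor
    · intro ⟨c, hc⟩; exact ⟨star c, by rw [hc, star_mul, mul_comm]⟩
    · intro ⟨c, hc⟩
      refine ⟨star c, ?_⟩
      have := congrArg star hc
      rwa [star_star, star_mul, mul_comm, star_star] at this
  have hsa : star ((a : GaussianInt)) = (a : GaussianInt) := star_natCast a
  have h1 : star π ∣ (a : GaussianInt) ↔ π ∣ (a : GaussianInt) := by
    rw [hstar π (a : GaussianInt), hsa]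
  have h2 : (∃ β : GaussianInt, star π ∣ (β ^ 2 - (a : GaussianInt)))
      ↔ (∃ β : GaussianInt, π ∣ (β ^ 2 - (a : GaussianInt))) := by
    constructor
    · rintro ⟨β, hβ⟩
      refine ⟨star β, ?_⟩
      rw [hstar, star_sub, star_pow, star_star, hsa]
      exact hβ
    · rintro ⟨β, hβ⟩
      refine ⟨star β, ?_⟩
      have := (hstar _ _).mp hβ
      rwa [star_sub, star_pow, hsa] at this
  unfold gQR
  by_cases hd : star π ∣ (a : GaussianInt)
  · rw [if_pos hd, if_pos (h1.mp hd)]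
  · rw [if_neg hd, if_neg (fun c => hd (h1.mpr c))]
    by_cases he : ∃ β : GaussianInt, star π ∣ (β ^ 2 - (a : GaussianInt))
    · rw [if_pos he, if_pos (h2.mp he)]
    · rw [if_neg he, if_neg (fun c => he (h2.mpr c))]

lemma gQR_mul_self {α π : GaussianInt} (h : ¬ π ∣ α) : gQR α π * gQR α π = 1 := by
  unfold gQR
  rw [if_neg h]
  by_cases he : ∃ β : GaussianInt, π ∣ (β ^ 2 - α)
  · rw [if_pos he]; ring
  · rw [if_neg he]; ring

end star

section primecase

lemma gQR_eq_one_of_sq {α π : GaussianInt} (hnd : ¬ π ∣ α)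
    (hsq : ∃ β : GaussianInt, π ∣ (β ^ 2 - α)) : gQR α π = 1 := by
  unfold gQR
  rw [if_neg hnd, if_pos hsq]

lemma gSym_nat_prime {p a : ℕ} (hp : p.Prime) (hp2 : p ≠ 2) (hpa : ¬ p ∣ a) :
    gSym (a : GaussianInt) (p : GaussianInt) = 1 := by
  haveI : Fact p.Prime := ⟨hp⟩
  have hodd : p % 2 = 1 := Nat.odd_iff.mp (hp.odd_of_ne_two hp2)
  rcases Nat.lt_or_ge (p % 4) 4 with h4 | h4
  swap
  · omega
  have hmod : p % 4 = 1 ∨ p % 4 = 3 := by omega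
  rcases hmod with h1 | h3
  · -- split case
    obtain ⟨x, y, hxy⟩ := Nat.Prime.sq_add_sq (p := p) (by omega)
    set π : GaussianInt := ⟨(x : ℤ), (y : ℤ)⟩ with hπ
    have hnormπ : Zsqrtd.norm π = (p : ℤ) := by
      have : Zsqrtd.norm π = (x : ℤ) * x - (-1) * y * y := rfl
      rw [this, ← hxy]
      push_cast
      ring
    have hnorms : Zsqrtd.norm (star π) = (p : ℤ) := by
      have : Zsqrtd.norm (star π) = (x : ℤ) * x - (-1) * (-(y : ℤ)) * (-(y : ℤ)) := rfl
      rw [this, ← hxy]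
      push_cast
      ring
    have hπp : Prime π := gi_prime_of_norm_prime (by rw [hnormπ, Int.natAbs_natCast]; exact hp)
    have hsp : Prime (star π) := gi_prime_of_norm_prime (by rw [hnorms, Int.natAbs_natCast]; exact hp)
    have hprod : (p : GaussianInt) = π * star π := by
      have := Zsqrtd.norm_eq_mul_conj π
      rw [hnormπ] at this
      exact_mod_cast this
    have hnd : ¬ π ∣ (a : GaussianInt) := by
      intro ⟨c, hc⟩
      have hnorm : Zsqrtd.norm (a : GaussianInt) = Zsqrtd.norm π * Zsqrtd.norm c := by
        rw [hc, Zsqrtd.norm_mul]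
      rw [Zsqrtd.norm_natCast, hnormπ] at hnorm
      have : (p : ℤ) ∣ (a : ℤ) * (a : ℤ) := ⟨_, hnorm⟩
      rcases (Nat.prime_iff_prime_int.mp hp).dvd_mul.mp this with h | h <;>
        exact hpa (Int.ofNat_dvd.mp (by exact_mod_cast h))
    rw [hprod, gSym_mul hπp.ne_zero hsp.ne_zero, gSym_irreducible hπp.irreducible,
      gSym_irreducible hsp.irreducible, gQR_star_natCast, gQR_mul_self hnd]
  · -- inert case
    have hprime : Prime (p : GaussianInt) :=
      (GaussianInt.prime_iff_mod_four_eq_three_of_nat_prime p).mpr h3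
    rw [gSym_irreducible hprime.irreducible]
    exact gQR_eq_one_of_sq (gi_nat_prime_not_dvd hp hpa) (exists_sqrt_inert hp h3 hpa)

end primecase


/-- If `a` and `b` are positive integers with `gcd(2a, b) = 1`, then the
Gaussian quadratic residue symbol `[a/b]` equals `1`. -/
theorem stmt11 (a b : ℕ) (ha : 0 < a) (hb : 0 < b)
    (hab : Nat.gcd (2 * a) b = 1) :
    gSym (a : GaussianInt) (b : GaussianInt) = 1 := by
  clear ha hb
  induction b using Nat.strong_induction_on with
  | _ b ih =>
    rcases eq_or_ne b 1 with rfl | hb1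
    · simpa using gSym_one_s11 (a : GaussianInt)
    rcases eq_or_ne b 0 with rfl | hb0
    · rw [Nat.gcd_zero_right] at hab
      omega
    set p := b.minFac with hpdef
    have hp : p.Prime := Nat.minFac_prime hb1
    have hpb : p ∣ b := Nat.minFac_dvd b
    have hp2a : ¬ p ∣ 2 * a := by
      intro h
      have : p ∣ 1 := hab ▸ Nat.dvd_gcd h hpb
      exact hp.one_lt.ne' (Nat.eq_one_of_dvd_one this)
    have hpa : ¬ p ∣ a := fun h => hp2a (h.mul_left 2)
    have hp2 : p ≠ 2 := fun h => hp2a (h ▸ Dvd.intro a rfl)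
    obtain ⟨c, hc⟩ := hpb
    have hc0 : c ≠ 0 := by rintro rfl; exact hb0 (by simpa using hc)
    have hcb : c < b := by
      have h2c : 2 * c ≤ p * c := Nat.mul_le_mul_right c hp.two_le
      omega
    have hgc : Nat.gcd (2 * a) c = 1 :=
      Nat.Coprime.coprime_dvd_right ⟨p, by rw [hc]; ring⟩ hab
    have hcast : (b : GaussianInt) = (p : GaussianInt) * (c : GaussianInt) := by
      rw [hc]; push_cast; ring
    have hpne : (p : GaussianInt) ≠ 0 := Nat.cast_ne_zero.mpr hp.ne_zero
    have hcne : (c : GaussianInt) ≠ 0 := Nat.cast_ne_zero.mpr hc0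
    rw [hcast, gSym_mul hpne hcne, gSym_nat_prime hp hp2 hpa, ih c hcb hgc, one_mul]
end
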